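/- arXiv:2301.02876 — 4 statements merged into one kernel-verified Lean document; each statement's English description precedes it below -/
import Mathlib

section
/- If a saturated assignment P has a non-integrated type-2 vertex and there exists a type-1 vertex x such that every type-2 neighbor of x is adjacent to some other type-1 vertex, then the set of non-integrated type-2 vertices forms an independent set in G. -/
/-!
If two non-integrated type-2 vertices `u`, `v` were adjacent, swap `u` with the type-1 vertex `x`.
Then `u` and `v` become integrated, while every integrated vertex other than `x` stays integrated:
a type-2 neighbour of `x` keeps another type-1 neighbour, and no vertex was integrated through
`u`, whose neighbours all share its type. The swap therefore raises the number of integrated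
vertices, contradicting saturation.
-/

open Finset
open scoped Classical

variable {V : Type*}

/-- A vertex `v` is integrated under assignment `P` (type-1 = `true`,
type-2 = `false`) if it has a neighbor of the other type. -/
def Integrated (G : SimpleGraph V) (P : V → Bool) (v : V) : Prop :=
  ∃ u, G.Adj v u ∧ P u ≠ P v

/-- The index of agent integration: the number of integrated vertices. -/
noncomputable def IoA (G : SimpleGraph V) [Fintype V] (P : V → Bool) : ℕ :=
  (Finset.univ.filter fun v => Integrated G P v).card

/-- Swap the types of vertices `x` and `y`. -/
noncomputable def swapAssign (P : V → Bool) (x y : V) : V → Bool :=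
  fun v => if v = x then P y else if v = y then P x else P v

/-- An assignment is saturated if no swap of types between a type-1 vertex and a
type-2 vertex strictly increases the number of integrated vertices. -/
def Saturated (G : SimpleGraph V) [Fintype V] (P : V → Bool) : Prop :=
  ∀ x y, P x = true → P y = false → IoA G (swapAssign P x y) ≤ IoA G P

theorem Finset.card_lt_of_insert_insert_erase_subset {α : Type*} [DecidableEq α]
    {s t : Finset α} {x u v : α} (huv : u ≠ v) (hu : u ∉ s) (hv : v ∉ s)
    (h : insert u (insert v (s.erase x)) ⊆ t) : #s < #t := by
  have hv' : v ∉ s.erase x := fun hv' => hv (mem_of_mem_erase hv')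
  have hu' : u ∉ insert v (s.erase x) := by
    simpa [huv] using fun hu' => hu (mem_of_mem_erase hu')
  have := card_le_card h
  rw [card_insert_of_notMem hu', card_insert_of_notMem hv'] at this
  have := pred_card_le_card_erase (s := s) (a := x)
  omega

section Swap

variable (P : V → Bool) (x y : V)

@[simp]
theorem swapAssign_right : swapAssign P x y y = P x := by
  by_cases h : y = x <;> simp [swapAssign, h]

theorem swapAssign_of_ne {w : V} (hx : w ≠ x) (hy : w ≠ y) : swapAssign P x y w = P w := by
  simp [swapAssign, hx, hy]

end Swap

variable {G : SimpleGraph V} {P Q : V → Bool}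

theorem not_integrated_iff {v : V} : ¬ Integrated G P v ↔ ∀ z, G.Adj v z → P z = P v := by
  simp [Integrated]

theorem IoA_lt_of_integrated_except [Fintype V] {x u v : V} (huv : u ≠ v)
    (hu : ¬ Integrated G P u) (hv : ¬ Integrated G P v)
    (hQu : Integrated G Q u) (hQv : Integrated G Q v)
    (hkeep : ∀ w, w ≠ x → Integrated G P w → Integrated G Q w) :
    IoA G P < IoA G Q := by
  refine card_lt_of_insert_insert_erase_subset (x := x) huv (by simpa) (by simpa) ?_
  intro w hw
  simp only [mem_insert, mem_erase, mem_filter, mem_univ, true_and] at hw ⊢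
  rcases hw with rfl | rfl | ⟨hwx, hw⟩
  exacts [hQu, hQv, hkeep w hwx hw]

theorem Integrated.swapAssign {x u w : V} (hx : P x = true)
    (hxN : ∀ y, G.Adj x y → P y = false → ∃ x', x' ≠ x ∧ P x' = true ∧ G.Adj y x')
    (hu : P u = false) (hnu : ¬ Integrated G P u) (hwx : w ≠ x) (hw : Integrated G P w) :
    Integrated G (swapAssign P x u) w := by
  obtain ⟨z, hwz, hzw⟩ := hw
  rw [not_integrated_iff] at hnu
  have hwu : w ≠ u := by rintro rfl; exact hzw (hnu z hwz)
  have hzu : z ≠ u := by rintro rfl; exact hzw (hnu w hwz.symm).symm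
  by_cases hzx : z = x
  · subst hzx
    have hwF : P w = false := Bool.eq_false_iff.mpr (hx ▸ hzw).symm
    obtain ⟨x', hx'z, hx', hwx'⟩ := hxN w hwz.symm hwF
    have hx'u : x' ≠ u := by rintro rfl; simp [hu] at hx'
    refine ⟨x', hwx', ?_⟩
    rw [swapAssign_of_ne P _ u hx'z hx'u, swapAssign_of_ne P _ u hwx hwu, hx', hwF]
    decide
  · exact ⟨z, hwz, by rwa [swapAssign_of_ne P x u hzx hzu, swapAssign_of_ne P x u hwx hwu]⟩

theorem stmt3_general [Fintype V] (G : SimpleGraph V) (P : V → Bool)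
    (hsat : Saturated G P)
    (hx : ∃ x, P x = true ∧ ∀ y, G.Adj x y → P y = false →
      ∃ x', x' ≠ x ∧ P x' = true ∧ G.Adj y x') :
    ∀ u v, P u = false → ¬ Integrated G P u →
      P v = false → ¬ Integrated G P v → ¬ G.Adj u v := by
  obtain ⟨x, hxT, hxN⟩ := hx
  intro u v hu hnu hv hnv huv
  have hvx : v ≠ x := by rintro rfl; simp_all
  have hvu : v ≠ u := huv.ne.symm
  have hQv : swapAssign P x u v = false := by rw [swapAssign_of_ne P x u hvx hvu, hv]
  have hQu : swapAssign P x u u = true := by rw [swapAssign_right, hxT]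
  have hlt := IoA_lt_of_integrated_except huv.ne hnu hnv
    ⟨v, huv, by rw [hQu, hQv]; decide⟩ ⟨u, huv.symm, by rw [hQu, hQv]; decide⟩
    (fun w hwx hw => hw.swapAssign hxT hxN hu hnu hwx)
  exact (hsat x u hxT hu).not_gt hlt

/-- Under Subcase 2.2, the non-integrated type-2 vertices form an independent set. -/
theorem stmt3 [Fintype V] (G : SimpleGraph V) (P : V → Bool)
    (hsat : Saturated G P)
    (hy : ∃ y, P y = false ∧ ¬ Integrated G P y)
    (hx : ∃ x, P x = true ∧ ∀ y, G.Adj x y → P y = false →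
      ∃ x', x' ≠ x ∧ P x' = true ∧ G.Adj y x') :
    ∀ u v, P u = false → ¬ Integrated G P u →
      P v = false → ¬ Integrated G P v → ¬ G.Adj u v :=
  stmt3_general G P hsat hx
end

section
/- For every real z ∈ [−1, 1], arccos(z)/π ≥ α_GW · (1 − z)/2, where α_GW = min over θ ∈ (0, π] of (2/π)·θ/(1 − cos θ); in particular arccos(z)/π ≥ 0.878 · (1 − z)/2. -/
/-!
With θ = arccos z ∈ [0, π] and z = cos θ, the bound with α_GW is the infimum property of
α_GW at θ (the case θ = 0 being trivial). The numerical bound is 0.439 π (1 - cos θ) ≤ θ.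
For θ ≤ 1.45 < 2 / (0.439 π) it follows from 1 - cos θ ≤ θ² / 2. For larger θ write
θ = π - s with s ≤ 1.6916; the Taylor bound cos s ≤ 1 - s² / 2 + s⁴ / 24 reduces it to a
quartic inequality in s, which holds with margin about 10⁻³ (attained near s ≈ 0.8155).
-/

open Real

theorem cos_le_one_sub_sq_div_two_add_pow_four (x : ℝ) :
    cos x ≤ 1 - x ^ 2 / 2 + x ^ 4 / 24 := by
  suffices h : MonotoneOn (fun y ↦ 1 - y ^ 2 / 2 + y ^ 4 / 24 - cos y) (Set.Ici 0) by
    have := h Set.self_mem_Ici (abs_nonneg x) (abs_nonneg x)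
    simpa [(by decide : Even 4).pow_abs] using this
  refine monotoneOn_of_deriv_nonneg (convex_Ici 0) (by fun_prop) (by fun_prop) fun y hy ↦ ?_
  have hderiv : HasDerivAt (fun y ↦ 1 - y ^ 2 / 2 + y ^ 4 / 24 - cos y)
      (sin y - (y - y ^ 3 / 6)) y :=
    ((((hasDerivAt_const y 1).sub ((hasDerivAt_pow 2 y).div_const 2)).add
      ((hasDerivAt_pow 4 y).div_const 24)).sub (hasDerivAt_cos y)).congr_deriv
      (by norm_num; ring)
  rw [hderiv.deriv, sub_nonneg]
  exact sin_ge_sub_cube (interior_subset hy)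

theorem mul_pi_mul_one_sub_cos_le_of_le {θ : ℝ} (h₀ : 0 ≤ θ) (h₁ : θ ≤ 1.45) :
    0.439 * π * (1 - cos θ) ≤ θ := by
  have hcos : 1 - cos θ ≤ θ ^ 2 / 2 := by linarith [one_sub_sq_div_two_le_cos (x := θ)]
  have hπ := pi_lt_d6
  calc 0.439 * π * (1 - cos θ) ≤ 0.439 * π * (θ ^ 2 / 2) := by gcongr
    _ ≤ θ := by nlinarith [mul_nonneg h₀ (sub_nonneg.2 h₁), mul_nonneg h₀ h₀]

theorem le_pi_mul_quartic {s : ℝ} (h₀ : 0 ≤ s) (h₁ : s ≤ 1.6916) :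
    s ≤ π * (0.122 + 0.2195 * s ^ 2 - 0.439 * s ^ 4 / 24) := by
  have hq : 0 ≤ 0.122 + 0.2195 * s ^ 2 - 0.439 * s ^ 4 / 24 := by
    nlinarith [mul_nonneg (mul_nonneg h₀ h₀) (sub_nonneg.2 h₁),
      mul_nonneg h₀ (sub_nonneg.2 h₁)]
  calc s ≤ 3.141592 * (0.122 + 0.2195 * s ^ 2 - 0.439 * s ^ 4 / 24) := by
        nlinarith [sq_nonneg (s - 0.8155), sq_nonneg (s * s - 0.665),
          mul_nonneg h₀ (sub_nonneg.2 h₁), mul_nonneg (mul_nonneg h₀ h₀) h₀,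
          mul_nonneg (mul_nonneg h₀ h₀) (sub_nonneg.2 h₁),
          mul_nonneg (mul_nonneg h₀ h₀) (sq_nonneg (s - 0.8155)),
          mul_nonneg (sub_nonneg.2 h₁) (sq_nonneg (s - 0.8155))]
    _ ≤ π * (0.122 + 0.2195 * s ^ 2 - 0.439 * s ^ 4 / 24) := by
        gcongr; exact pi_gt_d6.le

theorem mul_pi_mul_one_sub_cos_le_of_ge {θ : ℝ} (h₁ : 1.45 ≤ θ) (h₂ : θ ≤ π) :
    0.439 * π * (1 - cos θ) ≤ θ := by
  set s := π - θ with hs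
  have hcos : cos θ = -cos s := by rw [hs, cos_pi_sub, neg_neg]
  have hquartic := cos_le_one_sub_sq_div_two_add_pow_four s
  have hpoly := le_pi_mul_quartic (s := s) (by linarith) (by linarith [pi_lt_d6])
  rw [hcos]
  nlinarith [pi_pos]

theorem mul_one_sub_cos_div_two_le_div_pi {θ : ℝ} (h₀ : 0 ≤ θ) (h₁ : θ ≤ π) :
    0.878 * ((1 - cos θ) / 2) ≤ θ / π := by
  have key : 0.439 * π * (1 - cos θ) ≤ θ := by
    rcases le_total θ 1.45 with h | h
    · exact mul_pi_mul_one_sub_cos_le_of_le h₀ h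
    · exact mul_pi_mul_one_sub_cos_le_of_ge h h₁
  rw [le_div_iff₀ pi_pos]
  linarith

theorem mul_one_sub_cos_div_two_le_of_le {c θ : ℝ} (h₀ : 0 < θ) (h₁ : θ ≤ π)
    (hc : c ≤ 2 / π * θ / (1 - cos θ)) : c * ((1 - cos θ) / 2) ≤ θ / π := by
  have hcos : 0 < 1 - cos θ := by
    simpa using cos_lt_cos_of_nonneg_of_le_pi le_rfl h₁ h₀
  calc c * ((1 - cos θ) / 2) ≤ 2 / π * θ / (1 - cos θ) * ((1 - cos θ) / 2) := by gcongr
    _ = θ / π := by field_simp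

/-- For every `z ∈ [-1,1]`, `arccos z / π ≥ α_GW · (1-z)/2`, where `α_GW` is the
Goemans–Williamson constant; in particular `arccos z / π ≥ 0.878 · (1-z)/2`. -/
theorem stmt9 (αGW : ℝ)
    (hαGW : αGW = sInf {r : ℝ | ∃ θ : ℝ, 0 < θ ∧ θ ≤ Real.pi ∧
      r = (2 / Real.pi) * θ / (1 - Real.cos θ)}) :
    ∀ z : ℝ, -1 ≤ z → z ≤ 1 →
      αGW * ((1 - z) / 2) ≤ Real.arccos z / Real.pi ∧
      (0.878 : ℝ) * ((1 - z) / 2) ≤ Real.arccos z / Real.pi := by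
  intro z hz₁ hz₂
  have hcos : cos (arccos z) = z := cos_arccos hz₁ hz₂
  refine ⟨?_, by
    simpa only [hcos] using mul_one_sub_cos_div_two_le_div_pi (arccos_nonneg z) (arccos_le_pi z)⟩
  rcases hz₂.eq_or_lt with rfl | hz
  · simp
  have hbdd :
      BddBelow {r : ℝ | ∃ θ : ℝ, 0 < θ ∧ θ ≤ π ∧ r = 2 / π * θ / (1 - cos θ)} := by
    refine ⟨0, ?_⟩
    rintro _ ⟨θ, hθ, -, rfl⟩
    exact div_nonneg (by positivity) (sub_nonneg.2 (cos_le_one θ))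
  have hα : αGW ≤ 2 / π * arccos z / (1 - cos (arccos z)) :=
    hαGW ▸ csInf_le hbdd ⟨_, arccos_pos.2 hz, arccos_le_pi z, rfl⟩
  simpa only [hcos] using mul_one_sub_cos_div_two_le_of_le (arccos_pos.2 hz) (arccos_le_pi z) hα
end

section
/- Let f(S) denote the number of integrated vertices when the vertices of S ⊆ V are assigned type 1 and V∖S type 2. In the greedy size-fixing procedure that repeatedly removes from V_1 the vertex whose removal maximizes f, each step satisfies f(V_1^{(t+1)})/|V_1^{(t+1)}| ≥ f(V_1^{(t)})/|V_1^{(t)}|, and hence after T steps f(V_1^{(T)})/|V_1^{(T)}| ≥ f(V_1)/|V_1|. -/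
/-!
Call a vertex *lost* at `j ∈ S` if it is integrated under `S` but not under `S \ {j}`. Fix for an
integrated vertex `v` a neighbour `u` of the other type; erasing any `j ∉ {u, v}` keeps `u` as a
witness, and exactly one of `u, v` lies in `S`, so `v` is lost at no more than one `j ∈ S`. Hence
`∑_{j ∈ S} (f(S) - f(S \ {j})) ≤ f(S)`, so the greedy (best) removal loses at most `f(S)/|S|`,
i.e. `f(S \ {i}) / (|S| - 1) ≥ f(S) / |S|`. Chaining the steps gives the bound after `T` steps.
-/

open Finset
open scoped Classical

variable {V : Type*}

/-- `fObj G S` is the number of integrated vertices when the vertices of `S` are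
assigned type 1 and those of `V \ S` type 2. -/
noncomputable def fObj (G : SimpleGraph V) [Fintype V] [DecidableEq V]
    (S : Finset V) : ℕ :=
  IoA G (fun v => decide (v ∈ S))

section integratedSet

variable [Fintype V] [DecidableEq V]

noncomputable def integratedSet (G : SimpleGraph V) (S : Finset V) : Finset V :=
  univ.filter fun v => Integrated G (fun v => decide (v ∈ S)) v

variable (G : SimpleGraph V) {S : Finset V} {u v : V}

lemma fObj_eq_card_integratedSet (S : Finset V) : fObj G S = #(integratedSet G S) := rfl

lemma mem_integratedSet : v ∈ integratedSet G S ↔ ∃ u, G.Adj v u ∧ ¬(u ∈ S ↔ v ∈ S) := by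
  simp [integratedSet, Integrated, decide_eq_decide]

lemma mem_integratedSet_erase {j : V} (hvu : G.Adj v u) (huv : ¬(u ∈ S ↔ v ∈ S))
    (hjv : j ≠ v) (hju : j ≠ u) : v ∈ integratedSet G (S.erase j) :=
  (mem_integratedSet G).2 ⟨u, hvu, by simpa [mem_erase, hjv.symm, hju.symm] using huv⟩

lemma disjoint_sdiff_integratedSet_erase {x y : V} (hx : x ∈ S) (hy : y ∈ S) (hxy : x ≠ y) :
    Disjoint (integratedSet G S \ integratedSet G (S.erase x))
      (integratedSet G S \ integratedSet G (S.erase y)) := by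
  refine disjoint_left.2 fun v hvx hvy => ?_
  obtain ⟨u, hvu, huv⟩ := (mem_integratedSet G).1 (mem_sdiff.1 hvx).1
  have hx' : x = v ∨ x = u := by
    by_contra! h
    exact (mem_sdiff.1 hvx).2 (mem_integratedSet_erase G hvu huv h.1 h.2)
  have hy' : y = v ∨ y = u := by
    by_contra! h
    exact (mem_sdiff.1 hvy).2 (mem_integratedSet_erase G hvu huv h.1 h.2)
  rcases hx' with rfl | rfl <;> rcases hy' with rfl | rfl <;> tauto

lemma sum_card_sdiff_integratedSet_erase_le (S : Finset V) :
    ∑ j ∈ S, #(integratedSet G S \ integratedSet G (S.erase j)) ≤ fObj G S := by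
  rw [fObj_eq_card_integratedSet, ← card_biUnion fun x hx y hy hxy =>
    disjoint_sdiff_integratedSet_erase G hx hy hxy]
  exact card_le_card (biUnion_subset.2 fun _ _ => sdiff_subset)

lemma card_mul_fObj_le_add_sum_fObj_erase (S : Finset V) :
    #S * fObj G S ≤ fObj G S + ∑ j ∈ S, fObj G (S.erase j) := by
  have hloss : ∀ j ∈ S, fObj G S ≤
      fObj G (S.erase j) + #(integratedSet G S \ integratedSet G (S.erase j)) := fun j _ => by
    rw [fObj_eq_card_integratedSet, fObj_eq_card_integratedSet, add_comm]
    exact card_le_card_sdiff_add_card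
  calc #S * fObj G S = ∑ _j ∈ S, fObj G S := by rw [sum_const, smul_eq_mul]
    _ ≤ ∑ j ∈ S, (fObj G (S.erase j) + #(integratedSet G S \ integratedSet G (S.erase j))) :=
      sum_le_sum hloss
    _ ≤ fObj G S + ∑ j ∈ S, fObj G (S.erase j) := by
      rw [sum_add_distrib, add_comm]
      exact Nat.add_le_add_right (sum_card_sdiff_integratedSet_erase_le G S) _

lemma fObj_mul_card_erase_le_of_forall_fObj_erase_le {i : V} (hi : i ∈ S)
    (hmax : ∀ j ∈ S, fObj G (S.erase j) ≤ fObj G (S.erase i)) :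
    fObj G S * #(S.erase i) ≤ fObj G (S.erase i) * #S := by
  have hsum : ∑ j ∈ S, fObj G (S.erase j) ≤ #S * fObj G (S.erase i) := by
    simpa only [sum_const, smul_eq_mul] using sum_le_sum hmax
  have hkey := (card_mul_fObj_le_add_sum_fObj_erase G S).trans (Nat.add_le_add_left hsum _)
  rw [card_erase_of_mem hi, Nat.mul_sub_one, mul_comm (fObj G (S.erase i)), mul_comm (fObj G S)]
  omega

end integratedSet

lemma mul_le_mul_of_forall_mul_succ_le (a b : ℕ → ℕ) (T : ℕ) (hb : ∀ t < T, 0 < b t)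
    (h : ∀ t < T, a t * b (t + 1) ≤ a (t + 1) * b t) : a 0 * b T ≤ a T * b 0 := by
  induction T with
  | zero => exact le_rfl
  | succ T ih =>
    have hprev := ih (fun t ht => hb t (by omega)) fun t ht => h t (by omega)
    have hlast := h T (by omega)
    refine Nat.le_of_mul_le_mul_right ?_ (hb T (by omega))
    calc a 0 * b (T + 1) * b T = a 0 * b T * b (T + 1) := by ring
      _ ≤ a T * b 0 * b (T + 1) := Nat.mul_le_mul_right _ hprev
      _ = a T * b (T + 1) * b 0 := by ring
      _ ≤ a (T + 1) * b T * b 0 := Nat.mul_le_mul_right _ hlast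
      _ = a (T + 1) * b 0 * b T := by ring

theorem stmt12_general [Fintype V] [DecidableEq V] (G : SimpleGraph V) (T : ℕ)
    (Vs : ℕ → Finset V)
    (hstep : ∀ t < T, ∃ i ∈ Vs t,
      Vs (t + 1) = (Vs t).erase i ∧
      ∀ j ∈ Vs t, fObj G ((Vs t).erase j) ≤ fObj G ((Vs t).erase i)) :
    (∀ t < T,
      fObj G (Vs t) * (Vs (t + 1)).card ≤ fObj G (Vs (t + 1)) * (Vs t).card) ∧
    fObj G (Vs 0) * (Vs T).card ≤ fObj G (Vs T) * (Vs 0).card := by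
  have hmono : ∀ t < T,
      fObj G (Vs t) * (Vs (t + 1)).card ≤ fObj G (Vs (t + 1)) * (Vs t).card := by
    intro t ht
    obtain ⟨i, hi, hnext, hmax⟩ := hstep t ht
    rw [hnext]
    exact fObj_mul_card_erase_le_of_forall_fObj_erase_le G hi hmax
  have hpos : ∀ t < T, 0 < (Vs t).card := by
    intro t ht
    obtain ⟨i, hi, -⟩ := hstep t ht
    exact card_pos.2 ⟨i, hi⟩
  exact ⟨hmono, mul_le_mul_of_forall_mul_succ_le (fun t => fObj G (Vs t))
    (fun t => (Vs t).card) T hpos hmono⟩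

/-- In the greedy size-fixing procedure, the ratio `f(V₁)/|V₁|` never decreases:
each greedy removal satisfies `f(V₁^{(t+1)})/|V₁^{(t+1)}| ≥ f(V₁^{(t)})/|V₁^{(t)}|`,
and hence after `T` steps `f(V₁^{(T)})/|V₁^{(T)}| ≥ f(V₁)/|V₁|`
(stated with the ratios cross-multiplied). -/
theorem stmt12 [Fintype V] [DecidableEq V] (G : SimpleGraph V) (T : ℕ)
    (Vs : ℕ → Finset V) (hcard : T < (Vs 0).card)
    (hstep : ∀ t < T, ∃ i ∈ Vs t,
      Vs (t + 1) = (Vs t).erase i ∧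
      ∀ j ∈ Vs t, fObj G ((Vs t).erase j) ≤ fObj G ((Vs t).erase i)) :
    (∀ t < T,
      fObj G (Vs t) * (Vs (t + 1)).card ≤ fObj G (Vs (t + 1)) * (Vs t).card) ∧
    fObj G (Vs 0) * (Vs T).card ≤ fObj G (Vs T) * (Vs 0).card :=
  stmt12_general G T Vs hstep
end

section
/- Removing one vertex j from the type-1 set decreases the number of integrated vertices by at most η_j + 1, where η_j is the number of neighbors of j in V∖V_1 that have no neighbor in V_1 other than j. -/
/-! A vertex other than `j` that is integrated for `V₁` stays integrated for `V₁ ∖ {j}`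
unless it is a type-2 vertex whose only type-1 neighbour was `j`, i.e. an external private
neighbour of `j`; so at most those vertices and `j` itself lose integration. -/

open Finset
open scoped Classical

variable {V : Type*}

section

variable [Fintype V] [DecidableEq V] (G : SimpleGraph V)

-- The paper's `η_j` is the cardinality of `externalPrivateNeighbors G V₁ j`.
noncomputable def externalPrivateNeighbors (S : Finset V) (j : V) : Finset V :=
  univ.filter fun y => G.Adj j y ∧ y ∉ S ∧ ∀ x ∈ S, G.Adj y x → x = j

theorem integrated_erase_or_mem_externalPrivateNeighbors {S : Finset V} {j v : V}
    (hv : Integrated G (fun v => decide (v ∈ S)) v) (hvj : v ≠ j) :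
    Integrated G (fun v => decide (v ∈ S.erase j)) v ∨ v ∈ externalPrivateNeighbors G S j := by
  obtain ⟨u, hvu, hu⟩ := hv
  by_cases hvS : v ∈ S
  · have huS : u ∉ S := by simpa [hvS] using hu
    exact .inl ⟨u, hvu, by simp [huS, hvS, hvj]⟩
  · by_cases hint : Integrated G (fun v => decide (v ∈ S.erase j)) v
    · exact .inl hint
    have hlone : ∀ x ∈ S, G.Adj v x → x = j := fun x hxS hvx => by
      by_contra hxj
      exact hint ⟨x, hvx, by simp [hxS, hxj, hvS]⟩
    have huS : u ∈ S := by simpa [hvS] using hu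
    have huj : u = j := hlone u huS hvu
    exact .inr (mem_filter.2 ⟨mem_univ v, huj ▸ hvu.symm, hvS, hlone⟩)

theorem filter_integrated_subset_erase (S : Finset V) (j : V) :
    univ.filter (fun v => Integrated G (fun v => decide (v ∈ S)) v) ⊆
      univ.filter (fun v => Integrated G (fun v => decide (v ∈ S.erase j)) v) ∪
        externalPrivateNeighbors G S j ∪ {j} := by
  intro v hv
  by_cases hvj : v = j
  · exact mem_union_right _ (mem_singleton.2 hvj)
  rcases integrated_erase_or_mem_externalPrivateNeighbors G (mem_filter.1 hv).2 hvj with h | h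
  · exact mem_union_left _ (mem_union_left _ (mem_filter.2 ⟨mem_univ v, h⟩))
  · exact mem_union_left _ (mem_union_right _ h)

end

theorem stmt13_general [Fintype V] [DecidableEq V] (G : SimpleGraph V)
    (V1 : Finset V) (j : V) :
    fObj G V1 ≤ fObj G (V1.erase j) +
      (Finset.univ.filter fun y =>
        G.Adj j y ∧ y ∉ V1 ∧ ∀ x ∈ V1, G.Adj y x → x = j).card + 1 :=
  calc fObj G V1
      ≤ (univ.filter (fun v => Integrated G (fun v => decide (v ∈ V1.erase j)) v) ∪
          externalPrivateNeighbors G V1 j ∪ {j}).card :=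
        card_le_card (filter_integrated_subset_erase G V1 j)
    _ ≤ fObj G (V1.erase j) + (externalPrivateNeighbors G V1 j).card + 1 :=
        (card_union_le _ _).trans (by grw [card_union_le, card_singleton]; rfl)

/-- Removing one vertex `j` from the type-1 set decreases the number of
integrated vertices by at most `η_j + 1`, where `η_j` is the number of type-2
neighbors of `j` having no type-1 neighbor other than `j`. -/
theorem stmt13 [Fintype V] [DecidableEq V] (G : SimpleGraph V)
    (V1 : Finset V) (j : V) (hj : j ∈ V1) :
    fObj G V1 ≤ fObj G (V1.erase j) +
      (Finset.univ.filter fun y =>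
        G.Adj j y ∧ y ∉ V1 ∧ ∀ x ∈ V1, G.Adj y x → x = j).card + 1 :=
  stmt13_general G V1 j
end
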